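/- Let X and Y be Banach spaces, and let γ and τ be operator ideal norms on the ideal F of finite-rank operators. Suppose that: (i) A(X) has a bounded approximate identity of bound λ; (ii) the multiplication map π : A(Y,X) ⊗̂ A(X,Y) → A(X) is surjective with inversion constant β; (iii) γ and τ are equivalent on one of F(Y,X) or F(X,Y), say cγ ≤ τ ≤ Cγ. Then γ and τ are equivalent on F(X); specifically, cβ^{-2}λ^{-2}γ ≤ τ ≤ Cβ^{2}λ^{2}γ on F(X). -/

import Mathlib

open Filter Topology
open scoped TensorProduct ENNReal

noncomputable section

/-- A continuous linear map has finite rank. -/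
def IsFinRank {X Y : Type*} [NormedAddCommGroup X] [NormedSpace ℂ X]
    [NormedAddCommGroup Y] [NormedSpace ℂ Y] (T : X →L[ℂ] Y) : Prop :=
  ∃ s : Submodule ℂ Y, FiniteDimensional ℂ s ∧ LinearMap.range (T : X →ₗ[ℂ] Y) ≤ s

/-- `T` is approximable: an operator-norm limit of finite-rank operators. -/
def IsApprox {X Y : Type*} [NormedAddCommGroup X] [NormedSpace ℂ X]
    [NormedAddCommGroup Y] [NormedSpace ℂ Y] (T : X →L[ℂ] Y) : Prop :=
  T ∈ closure {S : X →L[ℂ] Y | IsFinRank S}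

/-- The linearization of composition on the algebraic tensor product. -/
def tComp {X Y Z : Type*} [NormedAddCommGroup X] [NormedSpace ℂ X]
    [NormedAddCommGroup Y] [NormedSpace ℂ Y] [NormedAddCommGroup Z] [NormedSpace ℂ Z] :
    ((Y →L[ℂ] Z) ⊗[ℂ] (X →L[ℂ] Y)) →ₗ[ℂ] (X →L[ℂ] Z) :=
  TensorProduct.lift ((ContinuousLinearMap.coeLM ℂ).comp
    (ContinuousLinearMap.compL ℂ X Y Z).toLinearMap)

/-- Post-composition by `A` as a linear map between operator spaces. -/
def postT {X Y Z : Type*} [NormedAddCommGroup X] [NormedSpace ℂ X]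
    [NormedAddCommGroup Y] [NormedSpace ℂ Y] [NormedAddCommGroup Z] [NormedSpace ℂ Z]
    (A : Y →L[ℂ] Z) : (X →L[ℂ] Y) →ₗ[ℂ] (X →L[ℂ] Z) :=
  (ContinuousLinearMap.compL ℂ X Y Z A).toLinearMap

/-- Pre-composition by `A` as a linear map between operator spaces. -/
def preT {X Y Z : Type*} [NormedAddCommGroup X] [NormedSpace ℂ X]
    [NormedAddCommGroup Y] [NormedSpace ℂ Y] [NormedAddCommGroup Z] [NormedSpace ℂ Z]
    (A : X →L[ℂ] Y) : (Y →L[ℂ] Z) →ₗ[ℂ] (X →L[ℂ] Z) :=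
  ((ContinuousLinearMap.compL ℂ X Y Z).flip A).toLinearMap

/-- `t` admits a finite representation by elementary tensors with factors in `SE`, `SF`. -/
def HasRepIn {E F : Type*} [NormedAddCommGroup E] [NormedSpace ℂ E]
    [NormedAddCommGroup F] [NormedSpace ℂ F] (SE : Set E) (SF : Set F) (t : E ⊗[ℂ] F) : Prop :=
  ∃ l : List (E × F), (∀ p ∈ l, p.1 ∈ SE ∧ p.2 ∈ SF) ∧
    (l.map fun p => p.1 ⊗ₜ[ℂ] p.2).sum = t

/-- The projective tensor norm of `t`, computed over representations with factors in
`SE`, `SF` (i.e. the projective norm of the corresponding tensor product of subspaces). -/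
def projNormOn {E F : Type*} [NormedAddCommGroup E] [NormedSpace ℂ E]
    [NormedAddCommGroup F] [NormedSpace ℂ F] (SE : Set E) (SF : Set F) (t : E ⊗[ℂ] F) : ℝ :=
  sInf {c | ∃ l : List (E × F), (∀ p ∈ l, p.1 ∈ SE ∧ p.2 ∈ SF) ∧
    (l.map fun p => p.1 ⊗ₜ[ℂ] p.2).sum = t ∧ (l.map fun p => ‖p.1‖ * ‖p.2‖).sum = c}

/-- The projective tensor norm. -/
def projNorm {E F : Type*} [NormedAddCommGroup E] [NormedSpace ℂ E]
    [NormedAddCommGroup F] [NormedSpace ℂ F] (t : E ⊗[ℂ] F) : ℝ :=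
  projNormOn Set.univ Set.univ t

/-- `Δ ∈ F(Y,X) ⊗ F(X,Y)` is a generalized diagonal for the algebra `A ⊆ B(X)`:
`W Δ = Δ W` and `π(Δ) W = W` for all `W ∈ A`. -/
def IsGenDiag {X Y : Type*} [NormedAddCommGroup X] [NormedSpace ℂ X]
    [NormedAddCommGroup Y] [NormedSpace ℂ Y] (A : Set (X →L[ℂ] X))
    (Δ : (Y →L[ℂ] X) ⊗[ℂ] (X →L[ℂ] Y)) : Prop :=
  (∀ W ∈ A, TensorProduct.map (postT W) LinearMap.id Δ =
      TensorProduct.map LinearMap.id (preT W) Δ) ∧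
  (∀ W ∈ A, (tComp Δ).comp W = W)

/-- `d` is an approximate diagonal of bound `K`, along the filter `Fl`, for the algebra
of operators `A ⊆ B(V)`: a bounded net in `A ⊗̂ A` with `π(d_i) a → a` and
`a·d_i − d_i·a → 0` (in projective norm) for every `a ∈ A`. -/
def IsApproxDiagFor {V : Type*} [NormedAddCommGroup V] [NormedSpace ℂ V]
    (A : Set (V →L[ℂ] V)) {ι : Type*} (Fl : Filter ι)
    (d : ι → (V →L[ℂ] V) ⊗[ℂ] (V →L[ℂ] V)) (K : ℝ) : Prop :=
  (∀ i, HasRepIn A A (d i) ∧ projNormOn A A (d i) ≤ K) ∧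
  (∀ a ∈ A, Tendsto (fun i => (tComp (d i)).comp a) Fl (𝓝 a)) ∧
  (∀ a ∈ A, Tendsto (fun i =>
      projNormOn A A (TensorProduct.map (postT a) LinearMap.id (d i)
        - TensorProduct.map LinearMap.id (preT a) (d i))) Fl (𝓝 (0 : ℝ)))

/-- The (not necessarily unital) operator algebra `A ⊆ B(V)` has an approximate diagonal of
bound `K`; for `A` the algebra of approximable operators this says that `A(V)` is
`K`-amenable. -/
def AmenableSetConst {V : Type*} [NormedAddCommGroup V] [NormedSpace ℂ V]
    (A : Set (V →L[ℂ] V)) (K : ℝ) : Prop :=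
  ∃ (ι : Type) (Fl : Filter ι) (d : ι → (V →L[ℂ] V) ⊗[ℂ] (V →L[ℂ] V)),
    Fl.NeBot ∧ IsApproxDiagFor A Fl d K

/-- The operator algebra `A ⊆ B(V)` is amenable (has some bounded approximate diagonal). -/
def AmenableSet {V : Type*} [NormedAddCommGroup V] [NormedSpace ℂ V]
    (A : Set (V →L[ℂ] V)) : Prop :=
  ∃ K : ℝ, AmenableSetConst A K

/-- The algebra `A(V)` of approximable operators on `V` is `K`-amenable. -/
def AmenableConst (V : Type*) [NormedAddCommGroup V] [NormedSpace ℂ V] (K : ℝ) : Prop :=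
  AmenableSetConst {T : V →L[ℂ] V | IsApprox T} K

/-- The algebra `A(V)` of approximable operators on `V` is amenable. -/
def AmenableA (V : Type*) [NormedAddCommGroup V] [NormedSpace ℂ V] : Prop :=
  ∃ K : ℝ, AmenableConst V K

/-- The Banach–Mazur distance (valued in `ℝ≥0∞`; `⊤` if the spaces are not isomorphic). -/
def BMdist (E F : Type*) [NormedAddCommGroup E] [NormedSpace ℂ E]
    [NormedAddCommGroup F] [NormedSpace ℂ F] : ℝ≥0∞ :=
  ⨅ T : E ≃L[ℂ] F, ENNReal.ofReal (‖(T : E →L[ℂ] F)‖ * ‖(T.symm : F →L[ℂ] E)‖)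


/-- An operator ideal norm on the operator ideal `F` of finite-rank operators
(between complex normed spaces in a fixed universe). -/
structure OpIdealNorm where
  gamma : ∀ (E F : Type u) [NormedAddCommGroup E] [NormedSpace ℂ E]
    [NormedAddCommGroup F] [NormedSpace ℂ F], (E →L[ℂ] F) → ℝ
  gamma_nonneg : ∀ (E F : Type u) [NormedAddCommGroup E] [NormedSpace ℂ E]
    [NormedAddCommGroup F] [NormedSpace ℂ F] (T : E →L[ℂ] F), 0 ≤ gamma E F T
  gamma_add_le : ∀ (E F : Type u) [NormedAddCommGroup E] [NormedSpace ℂ E]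
    [NormedAddCommGroup F] [NormedSpace ℂ F] (S T : E →L[ℂ] F),
    IsFinRank S → IsFinRank T → gamma E F (S + T) ≤ gamma E F S + gamma E F T
  gamma_smul : ∀ (E F : Type u) [NormedAddCommGroup E] [NormedSpace ℂ E]
    [NormedAddCommGroup F] [NormedSpace ℂ F] (a : ℂ) (T : E →L[ℂ] F),
    IsFinRank T → gamma E F (a • T) = ‖a‖ * gamma E F T
  gamma_def : ∀ (E F : Type u) [NormedAddCommGroup E] [NormedSpace ℂ E]
    [NormedAddCommGroup F] [NormedSpace ℂ F] (T : E →L[ℂ] F),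
    IsFinRank T → gamma E F T = 0 → T = 0
  gamma_id : gamma (ULift ℂ) (ULift ℂ) (ContinuousLinearMap.id ℂ (ULift ℂ)) = 1
  gamma_comp : ∀ (E F E₀ F₀ : Type u) [NormedAddCommGroup E] [NormedSpace ℂ E]
    [NormedAddCommGroup F] [NormedSpace ℂ F] [NormedAddCommGroup E₀] [NormedSpace ℂ E₀]
    [NormedAddCommGroup F₀] [NormedSpace ℂ F₀]
    (A : F →L[ℂ] F₀) (T : E →L[ℂ] F) (B : E₀ →L[ℂ] E), IsFinRank T →
    gamma E₀ F₀ ((A.comp T).comp B) ≤ ‖A‖ * gamma E F T * ‖B‖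

/-- `A(V)` has a bounded approximate identity of bound `lam`. -/
def HasBAIof (V : Type*) [NormedAddCommGroup V] [NormedSpace ℂ V] (lam : ℝ) : Prop :=
  ∃ (ι : Type) (Fl : Filter ι) (eA : ι → V →L[ℂ] V), Fl.NeBot ∧
    (∀ i, IsApprox (eA i) ∧ ‖eA i‖ ≤ lam) ∧
    (∀ a : V →L[ℂ] V, IsApprox a → Tendsto (fun i => (eA i).comp a) Fl (𝓝 a) ∧
      Tendsto (fun i => a.comp (eA i)) Fl (𝓝 a))

/-- The multiplication map `π : A(Y,X) ⊗̂ A(X,Y) → A(X)` is surjective with inversion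
constant at most `β`: every approximable `T` on `X` is an absolutely convergent sum
`∑ Rᵢ Sᵢ` with `Rᵢ ∈ A(Y,X)`, `Sᵢ ∈ A(X,Y)` and `∑ ‖Rᵢ‖‖Sᵢ‖ ≤ β‖T‖ + ε`. -/
def MulSurjInv (Y X : Type*) [NormedAddCommGroup X] [NormedSpace ℂ X]
    [NormedAddCommGroup Y] [NormedSpace ℂ Y] (β : ℝ) : Prop :=
  ∀ T : X →L[ℂ] X, IsApprox T → ∀ ε > (0 : ℝ),
    ∃ (R : ℕ → Y →L[ℂ] X) (S : ℕ → X →L[ℂ] Y),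
      (∀ i, IsApprox (R i) ∧ IsApprox (S i)) ∧
      Summable (fun i => ‖R i‖ * ‖S i‖) ∧
      (∑' i, ‖R i‖ * ‖S i‖) ≤ β * ‖T‖ + ε ∧
      HasSum (fun i => (R i).comp (S i)) T

/-!
Approximate a finite-rank `T` on `X` by `T e`, with `e` from the bounded approximate identity;
this approximation also holds in `τ` because `T` is a finite sum of rank-one operators, on which
every ideal norm is dominated by the operator norm. Factor `e = ∑ Rᵢ Sᵢ` through `Y` with
`∑ ‖Rᵢ‖ ‖Sᵢ‖ ≈ β ‖e‖ ≤ β λ`; then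
`τ (T Rᵢ Sᵢ) ≤ τ (T Rᵢ) ‖Sᵢ‖ ≤ C γ (T Rᵢ) ‖Sᵢ‖ ≤ C γ T ‖Rᵢ‖ ‖Sᵢ‖`,
so `τ ≤ C β λ γ` on `F(X)`, which implies the stated bound as `β, λ ≥ 1`. If the comparison
holds on `F(X, Y)` instead, use `e T` and factor on the other side; the lower bound is the same
argument with `γ` and `τ` exchanged.
-/

universe u

section FiniteRank

variable {E F G : Type*} [NormedAddCommGroup E] [NormedSpace ℂ E]
  [NormedAddCommGroup F] [NormedSpace ℂ F] [NormedAddCommGroup G] [NormedSpace ℂ G]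

theorem isFinRank_zero : IsFinRank (0 : E →L[ℂ] F) :=
  ⟨⊥, inferInstance, by simp⟩

theorem IsFinRank.isApprox {T : E →L[ℂ] F} (h : IsFinRank T) : IsApprox T :=
  subset_closure h

theorem IsFinRank.comp_right {M : E →L[ℂ] F} (h : IsFinRank M) (B : G →L[ℂ] E) :
    IsFinRank (M ∘L B) := by
  obtain ⟨s, hs, hr⟩ := h
  exact ⟨s, hs, by rintro y ⟨x, rfl⟩; exact hr ⟨B x, rfl⟩⟩

theorem IsFinRank.comp_left {M : E →L[ℂ] F} (h : IsFinRank M) (A : F →L[ℂ] G) :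
    IsFinRank (A ∘L M) := by
  obtain ⟨s, hs, hr⟩ := h
  refine ⟨s.map (A : F →ₗ[ℂ] G), inferInstance, ?_⟩
  rintro y ⟨x, rfl⟩
  exact ⟨M x, hr ⟨x, rfl⟩, rfl⟩

theorem IsFinRank.add {M N : E →L[ℂ] F} (hM : IsFinRank M) (hN : IsFinRank N) :
    IsFinRank (M + N) := by
  obtain ⟨s, hs, hrs⟩ := hM
  obtain ⟨t, ht, hrt⟩ := hN
  refine ⟨s ⊔ t, inferInstance, ?_⟩
  rintro y ⟨x, rfl⟩
  exact Submodule.add_mem _ (Submodule.mem_sup_left (hrs ⟨x, rfl⟩))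
    (Submodule.mem_sup_right (hrt ⟨x, rfl⟩))

theorem IsFinRank.neg {M : E →L[ℂ] F} (hM : IsFinRank M) : IsFinRank (-M) := by
  obtain ⟨s, hs, hrs⟩ := hM
  exact ⟨s, hs, by rintro y ⟨x, rfl⟩; exact Submodule.neg_mem _ (hrs ⟨x, rfl⟩)⟩

theorem IsFinRank.sub {M N : E →L[ℂ] F} (hM : IsFinRank M) (hN : IsFinRank N) :
    IsFinRank (M - N) := by
  rw [sub_eq_add_neg]
  exact hM.add hN.neg

theorem isFinRank_sum {ι : Type*} (s : Finset ι) {g : ι → E →L[ℂ] F}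
    (h : ∀ i ∈ s, IsFinRank (g i)) : IsFinRank (∑ i ∈ s, g i) := by
  classical
  induction s using Finset.induction_on with
  | empty => simpa using isFinRank_zero
  | insert a s ha ih =>
    rw [Finset.sum_insert ha]
    exact (h a (Finset.mem_insert_self a s)).add
      (ih fun i hi => h i (Finset.mem_insert_of_mem hi))

theorem isFinRank_smulRight (f : StrongDual ℂ E) (v : F) : IsFinRank (f.smulRight v) := by
  refine ⟨Submodule.span ℂ {v}, inferInstance, ?_⟩
  rintro y ⟨x, rfl⟩
  exact Submodule.smul_mem _ _ (Submodule.mem_span_singleton_self v)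

theorem exists_isFinRank_ne_zero [Nontrivial E] [Nontrivial F] :
    ∃ M : E →L[ℂ] F, IsFinRank M ∧ M ≠ 0 := by
  obtain ⟨x, hx⟩ := exists_ne (0 : E)
  obtain ⟨v, hv⟩ := exists_ne (0 : F)
  obtain ⟨g, -, hgx⟩ := exists_dual_vector' ℂ x
  refine ⟨g.smulRight v, isFinRank_smulRight g v, fun h => ?_⟩
  have : g x • v = 0 := by simpa using congrArg (· x) h
  simp_all

theorem IsFinRank.exists_eq_sum_smulRight {T : E →L[ℂ] F} (hT : IsFinRank T) :
    ∃ (n : ℕ) (f : Fin n → StrongDual ℂ E) (v : Fin n → F),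
      T = ∑ k, (f k).smulRight (v k) := by
  obtain ⟨s, hs, hr⟩ := hT
  let T' : E →L[ℂ] s := T.codRestrict s fun x => hr ⟨x, rfl⟩
  let b := Module.finBasis ℂ s
  refine ⟨_, fun k => LinearMap.toContinuousLinearMap (b.coord k) ∘L T', fun k => b k, ?_⟩
  ext x
  have h : ((∑ k, b.repr (T' x) k • b k : s) : F) = T' x := by rw [b.sum_repr]
  push_cast at h
  simpa [T'] using h.symm

end FiniteRank

theorem nontrivial_of_continuousLinearMap_ne_zero {E F : Type*} [NormedAddCommGroup E]
    [NormedSpace ℂ E] [NormedAddCommGroup F] [NormedSpace ℂ F] {T : E →L[ℂ] F} (hT : T ≠ 0) :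
    Nontrivial E := by
  obtain ⟨x, hx⟩ := DFunLike.ne_iff.mp hT
  exact nontrivial_of_ne x 0 fun h => hx (by simp [h])

namespace OpIdealNorm

variable (γ : OpIdealNorm.{u}) {E F G : Type u} [NormedAddCommGroup E] [NormedSpace ℂ E]
  [NormedAddCommGroup F] [NormedSpace ℂ F] [NormedAddCommGroup G] [NormedSpace ℂ G]

theorem gamma_zero : γ.gamma E F 0 = 0 := by
  simpa using γ.gamma_smul E F 0 0 isFinRank_zero

theorem gamma_pos {M : E →L[ℂ] F} (hM : IsFinRank M) (hM0 : M ≠ 0) : 0 < γ.gamma E F M :=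
  (γ.gamma_nonneg E F M).lt_of_ne fun h => hM0 (γ.gamma_def E F M hM h.symm)

theorem gamma_neg {M : E →L[ℂ] F} (hM : IsFinRank M) : γ.gamma E F (-M) = γ.gamma E F M := by
  simpa using γ.gamma_smul E F (-1) M hM

theorem gamma_sub_le {M N : E →L[ℂ] F} (hM : IsFinRank M) (hN : IsFinRank N) :
    γ.gamma E F (M - N) ≤ γ.gamma E F M + γ.gamma E F N := by
  simpa [sub_eq_add_neg, γ.gamma_neg hN] using γ.gamma_add_le E F M (-N) hM hN.neg

theorem gamma_sum_le {ι : Type*} (s : Finset ι) {g : ι → E →L[ℂ] F}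
    (hg : ∀ i ∈ s, IsFinRank (g i)) :
    γ.gamma E F (∑ i ∈ s, g i) ≤ ∑ i ∈ s, γ.gamma E F (g i) := by
  classical
  induction s using Finset.induction_on with
  | empty => simp [γ.gamma_zero]
  | insert a s ha ih =>
    have hs : ∀ i ∈ s, IsFinRank (g i) := fun i hi => hg i (Finset.mem_insert_of_mem hi)
    rw [Finset.sum_insert ha, Finset.sum_insert ha]
    exact (γ.gamma_add_le E F _ _ (hg a (Finset.mem_insert_self a s)) (isFinRank_sum s hs)).trans
      (add_le_add_right (ih hs) _)

theorem gamma_comp_left_le (A : F →L[ℂ] G) {M : E →L[ℂ] F} (hM : IsFinRank M) :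
    γ.gamma E G (A ∘L M) ≤ ‖A‖ * γ.gamma E F M := by
  have h := γ.gamma_comp E F E G A M (ContinuousLinearMap.id ℂ E) hM
  rw [ContinuousLinearMap.comp_id] at h
  exact h.trans (mul_le_of_le_one_right (by have := γ.gamma_nonneg E F M; positivity)
    ContinuousLinearMap.norm_id_le)

theorem gamma_comp_right_le {M : E →L[ℂ] F} (hM : IsFinRank M) (B : G →L[ℂ] E) :
    γ.gamma G F (M ∘L B) ≤ γ.gamma E F M * ‖B‖ := by
  have h := γ.gamma_comp E F G F (ContinuousLinearMap.id ℂ F) M B hM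
  rw [ContinuousLinearMap.id_comp] at h
  exact h.trans (mul_le_mul_of_nonneg_right
    (mul_le_of_le_one_left (γ.gamma_nonneg E F M) ContinuousLinearMap.norm_id_le) (norm_nonneg B))

/-- Rank-one operators factor through the scalars, where the ideal norm is normalised. -/
theorem gamma_smulRight_le (f : StrongDual ℂ E) (v : F) :
    γ.gamma E F (f.smulRight v) ≤ ‖f.smulRight v‖ := by
  let U : ULift.{u} ℂ ≃ₗᵢ[ℂ] ℂ := LinearIsometryEquiv.ulift ℂ ℂ
  have hfac : ((U : ULift.{u} ℂ →L[ℂ] ℂ).smulRight v ∘L ContinuousLinearMap.id ℂ (ULift ℂ)) ∘L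
      ((U.symm : ℂ →L[ℂ] ULift.{u} ℂ) ∘L f) = f.smulRight v := by
    ext x
    simp
  have hid : IsFinRank (ContinuousLinearMap.id ℂ (ULift.{u} ℂ)) := ⟨⊤, inferInstance, le_top⟩
  have h := γ.gamma_comp _ _ E F ((U : ULift.{u} ℂ →L[ℂ] ℂ).smulRight v) _
    ((U.symm : ℂ →L[ℂ] ULift.{u} ℂ) ∘L f) hid
  rw [hfac, γ.gamma_id, mul_one] at h
  refine h.trans ?_
  rw [ContinuousLinearMap.norm_smulRight_apply, ContinuousLinearMap.norm_smulRight_apply, mul_comm]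
  gcongr
  · exact (ContinuousLinearMap.opNorm_comp_le _ _).trans
      (mul_le_of_le_one_left (norm_nonneg f) U.symm.toLinearIsometry.norm_toContinuousLinearMap_le)
  · exact mul_le_of_le_one_left (norm_nonneg v) U.toLinearIsometry.norm_toContinuousLinearMap_le

theorem nonneg_of_gamma_le_mul [Nontrivial E] [Nontrivial F] (τ : OpIdealNorm.{u}) {C : ℝ}
    (h : ∀ M : E →L[ℂ] F, IsFinRank M → τ.gamma E F M ≤ C * γ.gamma E F M) : 0 ≤ C := by
  obtain ⟨M, hM, hM0⟩ := exists_isFinRank_ne_zero (E := E) (F := F)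
  exact nonneg_of_mul_nonneg_left ((τ.gamma_nonneg E F M).trans (h M hM)) (γ.gamma_pos hM hM0)

theorem gamma_le_of_tendsto_gamma_sub {ι : Type*} {l : Filter ι} [l.NeBot] {T : E →L[ℂ] F}
    (hT : IsFinRank T) {S : ι → E →L[ℂ] F} (hS : ∀ i, IsFinRank (S i)) {b : ℝ}
    (hb : ∀ i, γ.gamma E F (S i) ≤ b)
    (hlim : Tendsto (fun i => γ.gamma E F (S i - T)) l (𝓝 0)) : γ.gamma E F T ≤ b := by
  refine ge_of_tendsto' (by simpa using hlim.const_add b) fun i => ?_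
  calc γ.gamma E F T = γ.gamma E F (S i - (S i - T)) := by rw [sub_sub_cancel]
    _ ≤ γ.gamma E F (S i) + γ.gamma E F (S i - T) := γ.gamma_sub_le (hS i) ((hS i).sub hT)
    _ ≤ b + γ.gamma E F (S i - T) := add_le_add_left (hb i) _

theorem tendsto_gamma_comp_sub_right {ι : Type*} {l : Filter ι} {T : E →L[ℂ] F}
    (hT : IsFinRank T) {A : ι → E →L[ℂ] E}
    (hA : ∀ (f : StrongDual ℂ E) (v : F), Tendsto (fun i => f.smulRight v ∘L A i) l
      (𝓝 (f.smulRight v))) :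
    Tendsto (fun i => γ.gamma E F (T ∘L A i - T)) l (𝓝 0) := by
  obtain ⟨n, f, v, rfl⟩ := hT.exists_eq_sum_smulRight
  have hrank : ∀ B : E →L[ℂ] E, ∀ k, (f k).smulRight (v k) ∘L B - (f k).smulRight (v k)
      = ((f k) ∘L B - f k).smulRight (v k) := fun B k => by ext; simp [sub_smul]
  refine squeeze_zero (fun i => γ.gamma_nonneg E F _) (fun i => ?_)
    (by simpa using tendsto_finsetSum Finset.univ fun k _ =>
      tendsto_iff_norm_sub_tendsto_zero.mp (hA (f k) (v k)))
  calc γ.gamma E F ((∑ k, (f k).smulRight (v k)) ∘L A i - ∑ k, (f k).smulRight (v k))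
      = γ.gamma E F (∑ k, ((f k) ∘L A i - f k).smulRight (v k)) := by
        congr 1
        ext x
        simp [sub_smul, Finset.sum_sub_distrib]
    _ ≤ ∑ k, ‖(f k).smulRight (v k) ∘L A i - (f k).smulRight (v k)‖ := by
        refine (γ.gamma_sum_le _ fun k _ => isFinRank_smulRight _ _).trans ?_
        simpa only [hrank] using Finset.sum_le_sum fun k _ => γ.gamma_smulRight_le _ _

theorem tendsto_gamma_comp_sub_left {ι : Type*} {l : Filter ι} {T : E →L[ℂ] F}
    (hT : IsFinRank T) {A : ι → F →L[ℂ] F}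
    (hA : ∀ (f : StrongDual ℂ E) (v : F), Tendsto (fun i => A i ∘L f.smulRight v) l
      (𝓝 (f.smulRight v))) :
    Tendsto (fun i => γ.gamma E F (A i ∘L T - T)) l (𝓝 0) := by
  obtain ⟨n, f, v, rfl⟩ := hT.exists_eq_sum_smulRight
  have hrank : ∀ B : F →L[ℂ] F, ∀ k, B ∘L (f k).smulRight (v k) - (f k).smulRight (v k)
      = (f k).smulRight (B (v k) - v k) := fun B k => by ext; simp [smul_sub]
  refine squeeze_zero (fun i => γ.gamma_nonneg E F _) (fun i => ?_)
    (by simpa using tendsto_finsetSum Finset.univ fun k _ =>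
      tendsto_iff_norm_sub_tendsto_zero.mp (hA (f k) (v k)))
  calc γ.gamma E F (A i ∘L (∑ k, (f k).smulRight (v k)) - ∑ k, (f k).smulRight (v k))
      = γ.gamma E F (∑ k, (f k).smulRight (A i (v k) - v k)) := by
        congr 1
        ext x
        simp [smul_sub, Finset.sum_sub_distrib]
    _ ≤ ∑ k, ‖A i ∘L (f k).smulRight (v k) - (f k).smulRight (v k)‖ := by
        refine (γ.gamma_sum_le _ fun k _ => isFinRank_smulRight _ _).trans ?_
        simpa only [hrank] using Finset.sum_le_sum fun k _ => γ.gamma_smulRight_le _ _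

end OpIdealNorm

theorem OpIdealNorm.gamma_map_le_tsum (γ : OpIdealNorm.{u}) {E F : Type u}
    [NormedAddCommGroup E] [NormedSpace ℂ E] [NormedAddCommGroup F] [NormedSpace ℂ F]
    {V : Type*} [NormedAddCommGroup V] [Module ℂ V] (Φ : V →ₗ[ℂ] E →L[ℂ] F)
    (hΦ : ∀ a, IsFinRank (Φ a)) {L : ℝ} (hL : ∀ a, γ.gamma E F (Φ a) ≤ L * ‖a‖)
    {a : ℕ → V} {e : V} (ha : HasSum a e) {b : ℕ → ℝ} (hb : Summable b)
    (hab : ∀ i, γ.gamma E F (Φ (a i)) ≤ b i) : γ.gamma E F (Φ e) ≤ ∑' i, b i := by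
  have hlim : Tendsto (fun s : Finset ℕ => ∑ i ∈ s, b i + L * ‖∑ i ∈ s, a i - e‖) atTop
      (𝓝 (∑' i, b i + L * 0)) :=
    Tendsto.add hb.hasSum ((tendsto_iff_norm_sub_tendsto_zero.mp ha).const_mul L)
  refine ge_of_tendsto' (by simpa using hlim) fun s => ?_
  calc γ.gamma E F (Φ e) = γ.gamma E F (Φ (∑ i ∈ s, a i) - Φ (∑ i ∈ s, a i - e)) := by
        rw [map_sub, sub_sub_cancel]
    _ ≤ γ.gamma E F (Φ (∑ i ∈ s, a i)) + γ.gamma E F (Φ (∑ i ∈ s, a i - e)) :=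
        γ.gamma_sub_le (hΦ _) (hΦ _)
    _ ≤ ∑ i ∈ s, b i + L * ‖∑ i ∈ s, a i - e‖ := by
        refine add_le_add ?_ (hL _)
        rw [map_sum]
        exact (γ.gamma_sum_le s fun i _ => hΦ (a i)).trans (Finset.sum_le_sum fun i _ => hab i)

namespace MulSurjInv

variable {X Y : Type*} [NormedAddCommGroup X] [NormedSpace ℂ X]
  [NormedAddCommGroup Y] [NormedSpace ℂ Y] {β : ℝ}

theorem le_mul_norm (h : MulSurjInv Y X β) {e : X →L[ℂ] X} (he : IsApprox e) {x K : ℝ}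
    (hK : 0 ≤ K)
    (hx : ∀ (R : ℕ → Y →L[ℂ] X) (S : ℕ → X →L[ℂ] Y), Summable (fun i => ‖R i‖ * ‖S i‖) →
      HasSum (fun i => R i ∘L S i) e → x ≤ K * ∑' i, ‖R i‖ * ‖S i‖) :
    x ≤ K * (β * ‖e‖) := by
  have hlim : Tendsto (fun ε => K * (β * ‖e‖ + ε)) (𝓝[>] 0) (𝓝 (K * (β * ‖e‖))) := by
    have hcont : Continuous fun ε : ℝ => K * (β * ‖e‖ + ε) := by fun_prop
    simpa using (hcont.tendsto 0).mono_left nhdsWithin_le_nhds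
  refine ge_of_tendsto hlim (eventually_nhdsWithin_of_forall fun ε hε => ?_)
  obtain ⟨R, S, -, hs, hle, hRS⟩ := h e he ε hε
  exact (hx R S hs hRS).trans (mul_le_mul_of_nonneg_left hle hK)

theorem one_le [Nontrivial X] (h : MulSurjInv Y X β) : 1 ≤ β := by
  obtain ⟨T, hT, hT0⟩ := exists_isFinRank_ne_zero (E := X) (F := X)
  have hle : ‖T‖ ≤ 1 * (β * ‖T‖) := h.le_mul_norm hT.isApprox zero_le_one fun R S hs hRS => by
    have hcomp : ∀ i, ‖R i ∘L S i‖ ≤ ‖R i‖ * ‖S i‖ := fun i =>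
      ContinuousLinearMap.opNorm_comp_le _ _
    have hs' : Summable fun i => ‖R i ∘L S i‖ := hs.of_nonneg_of_le (fun _ => norm_nonneg _) hcomp
    rw [one_mul, ← hRS.tsum_eq]
    exact (norm_tsum_le_tsum_norm hs').trans (hs'.tsum_le_tsum hcomp hs)
  nlinarith [norm_pos_iff.mpr hT0]

theorem nontrivial [Nontrivial X] (h : MulSurjInv Y X β) : Nontrivial Y := by
  by_contra hY
  rw [not_nontrivial_iff_subsingleton] at hY
  obtain ⟨T, hT, hT0⟩ := exists_isFinRank_ne_zero (E := X) (F := X)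
  obtain ⟨R, S, -, -, -, hRS⟩ := h T hT.isApprox 1 one_pos
  have hzero : (fun i => R i ∘L S i) = 0 := funext fun i => by
    rw [Subsingleton.elim (S i) 0]
    simp
  rw [hzero] at hRS
  exact hT0 (hRS.unique hasSum_zero)

end MulSurjInv

theorem HasBAIof.one_le {X : Type*} [NormedAddCommGroup X] [NormedSpace ℂ X] [Nontrivial X]
    {lam : ℝ} (h : HasBAIof X lam) : 1 ≤ lam := by
  obtain ⟨T, hT, hT0⟩ := exists_isFinRank_ne_zero (E := X) (F := X)
  obtain ⟨ι, l, e, hl, he, hconv⟩ := h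
  have hle : ‖T‖ ≤ lam * ‖T‖ := le_of_tendsto' (hconv T hT.isApprox).1.norm fun i =>
    (ContinuousLinearMap.opNorm_comp_le _ _).trans
      (mul_le_mul_of_nonneg_right (he i).2 (norm_nonneg _))
  nlinarith [norm_pos_iff.mpr hT0]

namespace MulSurjInv

variable (γ τ : OpIdealNorm.{u}) {X Y Z : Type u} [NormedAddCommGroup X] [NormedSpace ℂ X]
  [NormedAddCommGroup Y] [NormedSpace ℂ Y] [NormedAddCommGroup Z] [NormedSpace ℂ Z]
  {β C : ℝ}

theorem gamma_comp_le_right (h : MulSurjInv Y X β) (hC : 0 ≤ C)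
    (hτγ : ∀ M : Y →L[ℂ] Z, IsFinRank M → τ.gamma Y Z M ≤ C * γ.gamma Y Z M)
    {T : X →L[ℂ] Z} (hT : IsFinRank T) {e : X →L[ℂ] X} (he : IsApprox e) :
    τ.gamma X Z (T ∘L e) ≤ C * γ.gamma X Z T * (β * ‖e‖) := by
  refine h.le_mul_norm he (mul_nonneg hC (γ.gamma_nonneg X Z T)) fun R S hs hRS => ?_
  rw [← tsum_mul_left]
  refine τ.gamma_map_le_tsum (postT T) (fun a => hT.comp_right a)
    (fun a => τ.gamma_comp_right_le hT a) hRS (hs.mul_left _) fun i => ?_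
  calc τ.gamma X Z ((T ∘L R i) ∘L S i) ≤ τ.gamma Y Z (T ∘L R i) * ‖S i‖ :=
        τ.gamma_comp_right_le (hT.comp_right _) _
    _ ≤ C * (γ.gamma X Z T * ‖R i‖) * ‖S i‖ := by
        gcongr
        exact (hτγ _ (hT.comp_right _)).trans
          (mul_le_mul_of_nonneg_left (γ.gamma_comp_right_le hT _) hC)
    _ = C * γ.gamma X Z T * (‖R i‖ * ‖S i‖) := by ring

theorem gamma_comp_le_left (h : MulSurjInv Y X β) (hC : 0 ≤ C)
    (hτγ : ∀ M : Z →L[ℂ] Y, IsFinRank M → τ.gamma Z Y M ≤ C * γ.gamma Z Y M)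
    {T : Z →L[ℂ] X} (hT : IsFinRank T) {e : X →L[ℂ] X} (he : IsApprox e) :
    τ.gamma Z X (e ∘L T) ≤ C * γ.gamma Z X T * (β * ‖e‖) := by
  refine h.le_mul_norm he (mul_nonneg hC (γ.gamma_nonneg Z X T)) fun R S hs hRS => ?_
  rw [← tsum_mul_left]
  refine τ.gamma_map_le_tsum (preT T) (fun a => hT.comp_left a)
    (fun a => (τ.gamma_comp_left_le a hT).trans_eq (mul_comm _ _)) hRS (hs.mul_left _) fun i => ?_
  calc τ.gamma Z X (R i ∘L (S i ∘L T)) ≤ ‖R i‖ * τ.gamma Z Y (S i ∘L T) :=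
        τ.gamma_comp_left_le _ (hT.comp_left _)
    _ ≤ ‖R i‖ * (C * (‖S i‖ * γ.gamma Z X T)) := by
        gcongr
        exact (hτγ _ (hT.comp_left _)).trans
          (mul_le_mul_of_nonneg_left (γ.gamma_comp_left_le _ hT) hC)
    _ = C * γ.gamma Z X T * (‖R i‖ * ‖S i‖) := by ring

end MulSurjInv

namespace OpIdealNorm

variable (γ τ : OpIdealNorm.{u}) {X Y : Type u} [NormedAddCommGroup X] [NormedSpace ℂ X]
  [NormedAddCommGroup Y] [NormedSpace ℂ Y] [Nontrivial X] {lam β : ℝ}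

theorem gamma_le_of_hasBAIof {C : ℝ} (h1 : HasBAIof X lam) (h2 : MulSurjInv Y X β)
    (h3 : (∀ M : Y →L[ℂ] X, IsFinRank M → τ.gamma Y X M ≤ C * γ.gamma Y X M) ∨
      (∀ M : X →L[ℂ] Y, IsFinRank M → τ.gamma X Y M ≤ C * γ.gamma X Y M))
    {T : X →L[ℂ] X} (hT : IsFinRank T) : τ.gamma X X T ≤ β * lam * (C * γ.gamma X X T) := by
  have := h2.nontrivial
  have hC : 0 ≤ C := h3.elim (γ.nonneg_of_gamma_le_mul τ) (γ.nonneg_of_gamma_le_mul τ)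
  have hβ : 0 ≤ β := zero_le_one.trans h2.one_le
  obtain ⟨ι, l, e, hl, he, hconv⟩ := h1
  have hbound : ∀ i, C * γ.gamma X X T * (β * ‖e i‖) ≤ β * lam * (C * γ.gamma X X T) :=
    fun i => by
      have := γ.gamma_nonneg X X T
      rw [mul_comm]
      gcongr
      exact (he i).2
  rcases h3 with h3 | h3
  · exact τ.gamma_le_of_tendsto_gamma_sub hT (fun i => hT.comp_right (e i))
      (fun i => (h2.gamma_comp_le_right γ τ hC h3 hT (he i).1).trans (hbound i))
      (τ.tendsto_gamma_comp_sub_right hT fun f v => (hconv _ (isFinRank_smulRight f v).isApprox).2)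
  · exact τ.gamma_le_of_tendsto_gamma_sub hT (fun i => hT.comp_left (e i))
      (fun i => (h2.gamma_comp_le_left γ τ hC h3 hT (he i).1).trans (hbound i))
      (τ.tendsto_gamma_comp_sub_left hT fun f v => (hconv _ (isFinRank_smulRight f v).isApprox).1)

theorem mul_gamma_le_of_hasBAIof {c : ℝ} (h1 : HasBAIof X lam) (h2 : MulSurjInv Y X β)
    (h3 : (∀ M : Y →L[ℂ] X, IsFinRank M → c * γ.gamma Y X M ≤ τ.gamma Y X M) ∨
      (∀ M : X →L[ℂ] Y, IsFinRank M → c * γ.gamma X Y M ≤ τ.gamma X Y M))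
    {T : X →L[ℂ] X} (hT : IsFinRank T) : c * γ.gamma X X T ≤ β * lam * τ.gamma X X T := by
  rcases le_or_gt c 0 with hc | hc
  · have := h1.one_le
    have := h2.one_le
    have := τ.gamma_nonneg X X T
    exact (mul_nonpos_of_nonpos_of_nonneg hc (γ.gamma_nonneg X X T)).trans (by positivity)
  · have h := τ.gamma_le_of_hasBAIof γ h1 h2 (h3.imp (fun h M hM => (le_inv_mul_iff₀ hc).2 (h M hM))
      fun h M hM => (le_inv_mul_iff₀ hc).2 (h M hM)) hT
    calc c * γ.gamma X X T ≤ c * (β * lam * (c⁻¹ * τ.gamma X X T)) := by gcongr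
      _ = β * lam * τ.gamma X X T := by field_simp

end OpIdealNorm

theorem le_sq_mul_of_le_mul {x a κ : ℝ} (hx : 0 ≤ x) (hκ : 1 ≤ κ) (h : x ≤ κ * a) :
    x ≤ κ ^ 2 * a := by
  have ha : 0 ≤ a := nonneg_of_mul_nonneg_right (hx.trans h) (by linarith)
  nlinarith

theorem inv_sq_mul_le_of_le_mul {x y κ : ℝ} (hy : 0 ≤ y) (hκ : 1 ≤ κ) (h : x ≤ κ * y) :
    κ⁻¹ ^ 2 * x ≤ y := by
  have hκ0 : 0 < κ := by linarith
  calc κ⁻¹ ^ 2 * x ≤ κ⁻¹ ^ 2 * (κ * y) := by gcongr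
    _ = κ⁻¹ * y := by field_simp
    _ ≤ y := inv_mul_le_of_le_mul₀ hκ0.le hy (by nlinarith)

theorem stmt7_general {X Y : Type u} [NormedAddCommGroup X] [NormedSpace ℂ X]
    [NormedAddCommGroup Y] [NormedSpace ℂ Y]
    (γ τ : OpIdealNorm.{u}) (lam β c C : ℝ)
    (h1 : HasBAIof X lam)
    (h2 : MulSurjInv Y X β)
    (h3 : (∀ T : Y →L[ℂ] X, IsFinRank T →
            c * γ.gamma Y X T ≤ τ.gamma Y X T ∧ τ.gamma Y X T ≤ C * γ.gamma Y X T) ∨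
          (∀ T : X →L[ℂ] Y, IsFinRank T →
            c * γ.gamma X Y T ≤ τ.gamma X Y T ∧ τ.gamma X Y T ≤ C * γ.gamma X Y T)) :
    ∀ T : X →L[ℂ] X, IsFinRank T →
      c * β⁻¹ ^ 2 * lam⁻¹ ^ 2 * γ.gamma X X T ≤ τ.gamma X X T ∧
      τ.gamma X X T ≤ C * β ^ 2 * lam ^ 2 * γ.gamma X X T := by
  intro T hT
  rcases eq_or_ne T 0 with rfl | hT0
  · simp [γ.gamma_zero, τ.gamma_zero]
  have : Nontrivial X := nontrivial_of_continuousLinearMap_ne_zero hT0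
  have hκ : 1 ≤ β * lam := one_le_mul_of_one_le_of_one_le h2.one_le h1.one_le
  constructor
  · calc c * β⁻¹ ^ 2 * lam⁻¹ ^ 2 * γ.gamma X X T = (β * lam)⁻¹ ^ 2 * (c * γ.gamma X X T) := by
          rw [mul_inv, mul_pow]
          ring
      _ ≤ τ.gamma X X T := inv_sq_mul_le_of_le_mul (τ.gamma_nonneg X X T) hκ
          (γ.mul_gamma_le_of_hasBAIof τ h1 h2
            (h3.imp (fun h M hM => (h M hM).1) fun h M hM => (h M hM).1) hT)
  · calc τ.gamma X X T ≤ (β * lam) ^ 2 * (C * γ.gamma X X T) :=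
          le_sq_mul_of_le_mul (τ.gamma_nonneg X X T) hκ (γ.gamma_le_of_hasBAIof τ h1 h2
            (h3.imp (fun h M hM => (h M hM).2) fun h M hM => (h M hM).2) hT)
      _ = C * β ^ 2 * lam ^ 2 * γ.gamma X X T := by ring

/-- If `A(X)` has a BAI of bound `λ`, the multiplication
`A(Y,X) ⊗̂ A(X,Y) → A(X)` is onto with inversion constant `β`, and the operator ideal
norms `γ`, `τ` satisfy `cγ ≤ τ ≤ Cγ` on `F(Y,X)` or on `F(X,Y)`, then
`cβ⁻²λ⁻²γ ≤ τ ≤ Cβ²λ²γ` on `F(X)`. -/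
theorem stmt7 {X Y : Type u} [NormedAddCommGroup X] [NormedSpace ℂ X] [CompleteSpace X]
    [NormedAddCommGroup Y] [NormedSpace ℂ Y] [CompleteSpace Y]
    (γ τ : OpIdealNorm.{u}) (lam β c C : ℝ)
    (h1 : HasBAIof X lam)
    (h2 : MulSurjInv Y X β)
    (h3 : (∀ T : Y →L[ℂ] X, IsFinRank T →
            c * γ.gamma Y X T ≤ τ.gamma Y X T ∧ τ.gamma Y X T ≤ C * γ.gamma Y X T) ∨
          (∀ T : X →L[ℂ] Y, IsFinRank T →
            c * γ.gamma X Y T ≤ τ.gamma X Y T ∧ τ.gamma X Y T ≤ C * γ.gamma X Y T)) :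
    ∀ T : X →L[ℂ] X, IsFinRank T →
      c * β⁻¹ ^ 2 * lam⁻¹ ^ 2 * γ.gamma X X T ≤ τ.gamma X X T ∧
      τ.gamma X X T ≤ C * β ^ 2 * lam ^ 2 * γ.gamma X X T :=
  stmt7_general γ τ lam β c C h1 h2 h3

end
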